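/- A finite form of Sylvester's identity: Let $n \ge 0$ be an integer and let $q, x$ be complex numbers such that $(q;q)_n \ne 0$ and $(xq^{k+1};q)_{n+1} \ne 0$ for all $0 \le k \le n$. Then $\sum_{k=0}^{n} (-1)^k x^k q^{k(3k+1)/2} \binom{n}{k}_q \frac{1 - xq^{2k+1}}{(xq^{k+1};q)_{n+1}} = 1$. -/
import Mathlib


set_option autoImplicit false

/-- The q-shifted factorial `(a;q)_n = ∏_{j=0}^{n-1} (1 - a q^j)`. -/
noncomputable def qPoch (q a : ℂ) (n : ℕ) : ℂ := ∏ j ∈ Finset.range n, (1 - a * q ^ j)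

/-- The q-binomial coefficient `(q;q)_n / ((q;q)_k (q;q)_{n-k})`. -/
noncomputable def qBinom (q : ℂ) (n k : ℕ) : ℂ := qPoch q q n / (qPoch q q k * qPoch q q (n - k))

/- ### Auxiliary lemmas -/

lemma qPoch_succ (q a : ℂ) (k : ℕ) : qPoch q a (k+1) = qPoch q a k * (1 - a * q ^ k) :=
  Finset.prod_range_succ _ _

lemma qPoch_zero (q a : ℂ) : qPoch q a 0 = 1 := rfl

lemma qPoch_add (q a : ℂ) (k l : ℕ) :
    qPoch q a (k + l) = qPoch q a k * qPoch q (a * q ^ k) l := by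
  induction l with
  | zero => simp [qPoch]
  | succ l ih =>
      rw [show k + (l+1) = (k+l)+1 by omega, qPoch_succ, ih, qPoch_succ, pow_add]
      ring

lemma qPoch_factor_ne {q a : ℂ} {r : ℕ} (h : qPoch q a r ≠ 0) {j : ℕ} (hj : j < r) :
    1 - a * q ^ j ≠ 0 := by
  intro h0
  exact h (Finset.prod_eq_zero (Finset.mem_range.2 hj) h0)

lemma qPoch_ne {q a : ℂ} {r : ℕ} (h : ∀ j < r, 1 - a * q ^ j ≠ 0) : qPoch q a r ≠ 0 :=
  Finset.prod_ne_zero_iff.2 fun j hj => h j (Finset.mem_range.1 hj)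

/- exponent arithmetic -/

lemma e_succ (m i : ℕ) : (i+1)*((i+1)+2*m+1)/2 = i*(i+2*m+1)/2 + (i+m+1) := by
  obtain ⟨t, ht⟩ := Nat.even_mul_succ_self i
  have h1 : i*(i+2*m+1) = t + t + 2*(m*i) := by rw [← ht]; ring
  have h2 : (i+1)*((i+1)+2*m+1) = t + t + 2*(m*i) + 2*(i+m+1) := by rw [← ht]; ring
  rw [h1, h2]
  generalize m * i = s
  omega

lemma e_shift (m i : ℕ) : i*(i+2*(m+1)+1)/2 = i*(i+2*m+1)/2 + i := by
  obtain ⟨t, ht⟩ := Nat.even_mul_succ_self i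
  have h1 : i*(i+2*m+1) = t + t + 2*(m*i) := by rw [← ht]; ring
  have h2 : i*(i+2*(m+1)+1) = t + t + 2*(m*i) + 2*i := by rw [← ht]; ring
  rw [h1, h2]
  generalize m * i = s
  omega

lemma tri_succ (j : ℕ) : (j+1)*(j+1+1)/2 = j*(j+1)/2 + (j+1) := by
  obtain ⟨t, ht⟩ := Nat.even_mul_succ_self j
  have h2 : (j+1)*(j+1+1) = t + t + 2*(j+1) := by rw [← ht]; ring
  rw [h2, ht]
  omega

/- ### q-binomial lemmas -/

lemma qq_sub_ne {q : ℂ} {n : ℕ} (hq : qPoch q q n ≠ 0) {j : ℕ} (h1 : 1 ≤ j) (h2 : j ≤ n) :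
    (1 : ℂ) - q ^ j ≠ 0 := by
  have := qPoch_factor_ne hq (show j - 1 < n by omega)
  rwa [show q * q ^ (j-1) = q ^ j by rw [← pow_succ']; congr 1; omega] at this

lemma qPoch_le_ne {q : ℂ} {n : ℕ} (hq : qPoch q q n ≠ 0) {k : ℕ} (hk : k ≤ n) :
    qPoch q q k ≠ 0 := by
  have h := qPoch_add q q k (n - k)
  rw [show k + (n-k) = n by omega] at h
  intro h0
  rw [h, h0] at hq
  simp at hq

lemma qBinom_zero {q : ℂ} {n : ℕ} (hq : qPoch q q n ≠ 0) : qBinom q n 0 = 1 := by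
  unfold qBinom
  rw [qPoch_zero, Nat.sub_zero, one_mul, div_self hq]

lemma qBinom_self {q : ℂ} {n : ℕ} (hq : qPoch q q n ≠ 0) : qBinom q n n = 1 := by
  unfold qBinom
  rw [Nat.sub_self, qPoch_zero, mul_one, div_self hq]

/-- Pascal-type relation: `[n;i+1](1-q^{i+1}) = [n;i](1-q^{n-i})` for `i < n`. -/
lemma qBinom_pascal_mul {q : ℂ} {n : ℕ} (hq : qPoch q q n ≠ 0) {i : ℕ} (hi : i < n) :
    qBinom q n (i+1) * (1 - q^(i+1)) = qBinom q n i * (1 - q^(n-i)) := by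
  unfold qBinom
  have hK : qPoch q q (i+1) = qPoch q q i * (1 - q^(i+1)) := by
    rw [qPoch_succ, ← pow_succ']
  have hM : qPoch q q (n-i) = qPoch q q (n-i-1) * (1 - q^(n-i)) := by
    rw [show n - i = (n-i-1)+1 by omega, qPoch_succ, ← pow_succ',
      show (n-i-1)+1 = n-i by omega]
  have hsub : n - (i+1) = n - i - 1 := by omega
  rw [hsub, hK, hM]
  have hKi : qPoch q q i ≠ 0 := qPoch_le_ne hq (by omega)
  have hMi : qPoch q q (n-i-1) ≠ 0 := qPoch_le_ne hq (by omega)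
  have hf1 : (1 : ℂ) - q^(i+1) ≠ 0 := by
    have := qPoch_le_ne hq (show i+1 ≤ n by omega)
    rw [hK] at this
    exact right_ne_zero_of_mul this
  have hf2 : (1 : ℂ) - q^(n-i) ≠ 0 := by
    have := qPoch_le_ne hq (show n-i ≤ n by omega)
    rw [hM] at this
    exact right_ne_zero_of_mul this
  field_simp

/-- Pascal recurrence: `[n+1;i+1] = q^{i+1}[n;i+1] + [n;i]` for `i+1 ≤ n`. -/
lemma qBinom_pascal2 {q : ℂ} {n : ℕ} (hq : qPoch q q (n+1) ≠ 0) {i : ℕ} (hi : i + 1 ≤ n) :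
    qBinom q (n+1) (i+1) = q^(i+1) * qBinom q n (i+1) + qBinom q n i := by
  unfold qBinom
  have hqn : qPoch q q n ≠ 0 := qPoch_le_ne hq (by omega)
  have hA : qPoch q q (n+1) = qPoch q q n * (1 - q^(n+1)) := by
    rw [qPoch_succ, ← pow_succ']
  have hK : qPoch q q (i+1) = qPoch q q i * (1 - q^(i+1)) := by
    rw [qPoch_succ, ← pow_succ']
  have hM : qPoch q q (n-i) = qPoch q q (n-i-1) * (1 - q^(n-i)) := by
    rw [show n - i = (n-i-1)+1 by omega, qPoch_succ, ← pow_succ',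
      show (n-i-1)+1 = n-i by omega]
  have h1 : n + 1 - (i+1) = n - i := by omega
  have h2 : n - (i+1) = n - i - 1 := by omega
  rw [h1, h2, hA, hK, hM]
  have hKi : qPoch q q i ≠ 0 := qPoch_le_ne hqn (by omega)
  have hMi : qPoch q q (n-i-1) ≠ 0 := qPoch_le_ne hqn (by omega)
  have hf1 : (1 : ℂ) - q^(i+1) ≠ 0 := by
    have := qPoch_le_ne hqn (show i+1 ≤ n by omega)
    rw [hK] at this; exact right_ne_zero_of_mul this
  have hf2 : (1 : ℂ) - q^(n-i) ≠ 0 := by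
    have := qPoch_le_ne hqn (show n-i ≤ n by omega)
    rw [hM] at this; exact right_ne_zero_of_mul this
  have hpow : (q:ℂ)^(n+1) = q^(i+1) * q^(n-i) := by
    rw [← pow_add]; congr 1; omega
  field_simp
  rw [hpow]
  ring

/-- Gauss's q-binomial theorem (finite product form). -/
lemma gauss_qbinom (q : ℂ) : ∀ n : ℕ, qPoch q q n ≠ 0 → ∀ x : ℂ,
    (∑ i ∈ Finset.range (n+1), (-1:ℂ)^i * x^i * q^(i*(i+1)/2) * qBinom q n i)
      = qPoch q (x*q) n := by
  intro n
  induction n with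
  | zero =>
      intro _ x
      simp [qPoch, qBinom]
  | succ n ih =>
      intro hq1 x
      have hqn : qPoch q q n ≠ 0 := qPoch_le_ne hq1 (by omega)
      have IH := ih hqn (x*q)
      have hrhs : qPoch q (x*q) (n+1)
          = (1 - x*q) * ∑ i ∈ Finset.range (n+1), (-1:ℂ)^i * (x*q)^i * q^(i*(i+1)/2) * qBinom q n i := by
        rw [IH, show n+1 = 1+n by omega, qPoch_add]
        congr 1
        · simp [qPoch]
        · rw [pow_one]
      rw [hrhs]
      rw [Finset.sum_range_succ' _ (n+1), Finset.sum_range_succ, one_sub_mul]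
      nth_rewrite 1 [Finset.sum_range_succ' _ n]
      rw [Finset.sum_range_succ]
      have hstep : ∀ j ∈ Finset.range n,
          (-1:ℂ)^(j+1) * x^(j+1) * q^((j+1)*(j+1+1)/2) * qBinom q (n+1) (j+1)
            = (-1:ℂ)^(j+1) * (x*q)^(j+1) * q^((j+1)*(j+1+1)/2) * qBinom q n (j+1)
              - (x*q) * ((-1:ℂ)^j * (x*q)^j * q^(j*(j+1)/2) * qBinom q n j) := by
        intro j hj
        have hjn : j + 1 ≤ n := Finset.mem_range.1 hj
        rw [qBinom_pascal2 hq1 hjn, tri_succ j, pow_add]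
        ring
      rw [Finset.sum_congr rfl hstep, Finset.sum_sub_distrib, ← Finset.mul_sum]
      have h0 : (-1:ℂ)^0 * x^0 * q^(0*(0+1)/2) * qBinom q (n+1) 0
          = (-1:ℂ)^0 * (x*q)^0 * q^(0*(0+1)/2) * qBinom q n 0 := by
        rw [qBinom_zero hq1, qBinom_zero hqn]
        norm_num
      have htop : (-1:ℂ)^(n+1) * x^(n+1) * q^((n+1)*(n+1+1)/2) * qBinom q (n+1) (n+1)
          = -((x*q) * ((-1:ℂ)^n * (x*q)^n * q^(n*(n+1)/2) * qBinom q n n)) := by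
        rw [qBinom_self hq1, qBinom_self hqn, tri_succ n, pow_add]
        ring
      rw [h0, htop]
      ring

/- ### The telescoping structure -/

noncomputable def sylSum (q x : ℂ) (n m : ℕ) : ℂ :=
  ∑ i ∈ Finset.Ico m (n+1), (-1:ℂ)^i * x^i * q^(i*(i+2*m+1)/2) * qBinom q n i

noncomputable def sylN (q x : ℂ) (n m : ℕ) : ℂ :=
  qPoch q (x*q) m * qPoch q (x*q^(n+m+1)) (n+1-m) * sylSum q x n m

lemma sum_Ico_telescope (w : ℕ → ℂ) {a b : ℕ} (hab : a ≤ b) :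
    ∑ i ∈ Finset.Ico a b, (w i - w (i+1)) = w a - w b := by
  induction b with
  | zero =>
      have : a = 0 := by omega
      subst this
      simp
  | succ b ih =>
      rcases Nat.lt_or_ge a (b+1) with h | h
      · have hab' : a ≤ b := by omega
        rw [Finset.sum_Ico_succ_top hab', ih hab']
        ring
      · have : a = b + 1 := by omega
        subst this
        simp

lemma sylvester_dagger (n : ℕ) (q x : ℂ) (hq : qPoch q q n ≠ 0) (m : ℕ) (hm : m ≤ n) :
    (1 - x*q^(n+m+1)) * sylSum q x n m - (1 - x*q^(m+1)) * sylSum q x n (m+1)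
      = (-1:ℂ)^m * x^m * q^(m*(3*m+1)/2) * qBinom q n m * (1 - x*q^(2*m+1)) := by
  set B : ℕ → ℂ := fun i => if i ≤ n then qBinom q n i * (1 - q^i) else 0 with hB
  set w : ℕ → ℂ := fun i => (-1:ℂ)^i * x^i * q^(i*(i+2*m+1)/2) * B i with hw
  have key : ∀ i, m+1 ≤ i → i ≤ n →
      (1 - x*q^(n+m+1)) * ((-1:ℂ)^i * x^i * q^(i*(i+2*m+1)/2) * qBinom q n i)
      - (1 - x*q^(m+1)) * ((-1:ℂ)^i * x^i * q^(i*(i+2*(m+1)+1)/2) * qBinom q n i)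
      = w i - w (i+1) := by
    intro i h1 h2
    have hxq : (q:ℂ)^(n+m+1) = q^(i+m+1) * q^(n-i) := by
      rw [← pow_add]; congr 1; omega
    simp only [hw, hB]
    rw [e_shift m i, e_succ m i, if_pos h2]
    rcases Nat.lt_or_ge i n with hi | hi
    · rw [if_pos (show i+1 ≤ n by omega), qBinom_pascal_mul hq hi, hxq, pow_add, pow_add]
      ring
    · rw [if_neg (show ¬ (i+1 ≤ n) by omega), hxq, pow_add, pow_add,
        show n-i = 0 by omega]
      simp only [pow_zero]
      ring
  unfold sylSum
  rw [Finset.sum_eq_sum_Ico_succ_bot (show m < n+1 by omega), mul_add, Finset.mul_sum,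
    Finset.mul_sum, add_sub_assoc, ← Finset.sum_sub_distrib]
  have hcong : ∀ i ∈ Finset.Ico (m+1) (n+1),
      (1 - x*q^(n+m+1)) * ((-1:ℂ)^i * x^i * q^(i*(i+2*m+1)/2) * qBinom q n i)
      - (1 - x*q^(m+1)) * ((-1:ℂ)^i * x^i * q^(i*(i+2*(m+1)+1)/2) * qBinom q n i)
      = w i - w (i+1) := by
    intro i hi
    rw [Finset.mem_Ico] at hi
    exact key i hi.1 (by omega)
  rw [Finset.sum_congr rfl hcong, sum_Ico_telescope w (by omega : m+1 ≤ n+1)]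
  have hwtop : w (n+1) = 0 := by
    simp only [hw, hB, if_neg (show ¬ (n+1 ≤ n) by omega)]
    ring
  rw [hwtop, sub_zero]
  rw [show m*(3*m+1) = m*(m+2*m+1) by ring]
  rcases Nat.lt_or_ge m n with hmn | hmn
  · simp only [hw, hB]
    rw [if_pos (show m+1 ≤ n by omega), qBinom_pascal_mul hq hmn, e_succ m m,
      show (q:ℂ)^(n+m+1) = q^(2*m+1) * q^(n-m) by rw [← pow_add]; congr 1; omega,
      pow_add, show m+m+1 = 2*m+1 by omega]
    ring
  · have : m = n := by omega
    subst this
    simp only [hw, hB, if_neg (show ¬ (m+1 ≤ m) by omega)]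
    rw [show m+m+1 = 2*m+1 by omega]
    ring

lemma sylvester_step (n : ℕ) (q x : ℂ) (hq : qPoch q q n ≠ 0) (m : ℕ) (hm : m ≤ n) :
    sylN q x n m - sylN q x n (m+1)
      = (-1:ℂ)^m * x^m * q^(m*(3*m+1)/2) * qBinom q n m * (1 - x*q^(2*m+1))
          * (qPoch q (x*q) m * qPoch q (x*q^(n+m+2)) (n-m)) := by
  unfold sylN
  have h1 : qPoch q (x*q^(n+m+1)) (n+1-m)
      = (1 - x*q^(n+m+1)) * qPoch q (x*q^(n+m+2)) (n-m) := by
    rw [show n+1-m = 1+(n-m) by omega, qPoch_add]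
    congr 1
    · simp [qPoch]
    · rw [show x*q^(n+m+1)*q^1 = x*q^(n+m+2) by rw [pow_one, mul_assoc, ← pow_succ]]
  have h2 : qPoch q (x*q) (m+1) = qPoch q (x*q) m * (1 - x*q^(m+1)) := by
    rw [qPoch_succ, show x*q*q^m = x*q^(m+1) by rw [pow_succ]; ring]
  rw [h1, h2, show n+(m+1)+1 = n+m+2 by omega, show n+1-(m+1) = n-m by omega]
  have hd := sylvester_dagger n q x hq m hm
  linear_combination (qPoch q (x*q) m * qPoch q (x*q^(n+m+2)) (n-m)) * hd

/-- A finite form of Sylvester's identity. -/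
theorem finite_sylvester (n : ℕ) (q x : ℂ) (hq : qPoch q q n ≠ 0)
    (hden : ∀ k ≤ n, qPoch q (x * q ^ (k + 1)) (n + 1) ≠ 0) :
    ∑ k ∈ Finset.range (n + 1),
      (-1 : ℂ) ^ k * x ^ k * q ^ (k * (3 * k + 1) / 2) * qBinom q n k *
        (1 - x * q ^ (2 * k + 1)) / qPoch q (x * q ^ (k + 1)) (n + 1)
    = 1 := by
  have hx : ∀ j, 1 ≤ j → j ≤ 2*n+1 → (1:ℂ) - x*q^j ≠ 0 := by
    intro j h1 h2
    rcases le_or_gt j (n+1) with h | h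
    · have := qPoch_factor_ne (hden (j-1) (by omega)) (show 0 < n+1 by omega)
      rwa [pow_zero, mul_one, show j-1+1 = j by omega] at this
    · have := qPoch_factor_ne (hden n le_rfl) (show j-(n+1) < n+1 by omega)
      rwa [mul_assoc, ← pow_add, show n+1+(j-(n+1)) = j by omega] at this
  have hpoch_ne : ∀ a b : ℕ, 1 ≤ a → a + b ≤ 2*n+2 → qPoch q (x*q^a) b ≠ 0 := by
    intro a b ha hb
    apply qPoch_ne
    intro j hj
    have := hx (a+j) (by omega) (by omega)
    rw [mul_assoc, ← pow_add]
    exact this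
  have hD : qPoch q (x*q) (2*n+1) ≠ 0 := by
    have := hpoch_ne 1 (2*n+1) le_rfl (by omega)
    rwa [pow_one] at this
  have hsplit : ∀ k, k ≤ n → qPoch q (x*q) (2*n+1)
      = qPoch q (x*q) k * (qPoch q (x*q^(k+1)) (n+1) * qPoch q (x*q^(n+k+2)) (n-k)) := by
    intro k hk
    rw [show 2*n+1 = k + ((n+1) + (n-k)) by omega, qPoch_add, qPoch_add,
      show x*q*q^k = x*q^(k+1) by rw [pow_succ]; ring,
      show x*q^(k+1)*q^(n+1) = x*q^(n+k+2) by
        rw [mul_assoc, ← pow_add, show k+1+(n+1) = n+k+2 by omega]]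
  have hterm : ∀ k ∈ Finset.range (n+1),
      (-1 : ℂ) ^ k * x ^ k * q ^ (k * (3 * k + 1) / 2) * qBinom q n k *
        (1 - x * q ^ (2 * k + 1)) / qPoch q (x * q ^ (k + 1)) (n + 1)
      = (sylN q x n k - sylN q x n (k+1)) / qPoch q (x*q) (2*n+1) := by
    intro k hk
    have hkn : k ≤ n := by
      have := Finset.mem_range.1 hk
      omega
    rw [sylvester_step n q x hq k hkn, div_eq_div_iff (hden k hkn) hD, hsplit k hkn]
    ring
  rw [Finset.sum_congr rfl hterm, ← Finset.sum_div, Finset.sum_range_sub' (sylN q x n) (n+1)]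
  have htop : sylN q x n (n+1) = 0 := by
    simp [sylN, sylSum]
  have hzero : sylN q x n 0 = qPoch q (x*q) (2*n+1) := by
    unfold sylN sylSum
    rw [qPoch_zero, one_mul, show Finset.Ico 0 (n+1) = Finset.range (n+1) from
      by rw [Finset.range_eq_Ico]]
    have hcong : ∀ i ∈ Finset.range (n+1),
        (-1:ℂ)^i * x^i * q^(i*(i+2*0+1)/2) * qBinom q n i
        = (-1:ℂ)^i * x^i * q^(i*(i+1)/2) * qBinom q n i := by
      intro i _
      norm_num
    rw [Finset.sum_congr rfl hcong, gauss_qbinom q n hq x,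
      show 2*n+1 = n + (n+1) by omega, qPoch_add,
      show x*q*q^n = x*q^(n+1) by rw [pow_succ]; ring,
      show n+0+1 = n+1 by omega, show n+1-0 = n+1 by omega]
    ring
  rw [htop, sub_zero, hzero, div_self hD]
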